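/- arXiv:0704.2458 — 3 statements merged into one kernel-verified Lean document; each statement's English description precedes it below -/
import Mathlib

section
/- If F : P₂(H) → [0,+∞] is strongly displacement convex, μ̄ ∈ P₂(H), and μ_τ minimizes μ ↦ F(μ) + (1/2τ)W₂²(μ, μ̄), then for every ν with F(ν) < ∞ one has W₂²(μ_τ, ν) − W₂²(μ̄, ν) + W₂²(μ_τ, μ̄) ≤ 2τ (F(ν) − F(μ_τ)). -/
open MeasureTheory ENNReal Filter Topology Pointwise
open scoped Classical

noncomputable section

variable {H : Type*} [NormedAddCommGroup H] [InnerProductSpace ℝ H]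
  [CompleteSpace H] [SecondCountableTopology H] [MeasurableSpace H] [BorelSpace H]

/-- A coupling of `μ` and `ν`: a measure on `H × H` with marginals `μ` and `ν`. -/
def IsCoupling (P : Measure (H × H)) (μ ν : Measure H) : Prop :=
  P.map Prod.fst = μ ∧ P.map Prod.snd = ν

/-- Squared 2-Wasserstein distance, as an infimum of quadratic transport costs. -/
noncomputable def W2sq (μ ν : Measure H) : ℝ≥0∞ :=
  ⨅ (P : Measure (H × H)) (_ : IsCoupling P μ ν),
    ∫⁻ p, ENNReal.ofReal (‖p.1 - p.2‖ ^ 2) ∂P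

/-- Finite second moment. -/
def HasFiniteSecondMoment (μ : Measure H) : Prop :=
  ∫⁻ x, ENNReal.ofReal (‖x‖ ^ 2) ∂μ < ⊤

/-- Membership in the Wasserstein space `P₂(H)`. -/
def MemP2 (μ : Measure H) : Prop :=
  IsProbabilityMeasure μ ∧ HasFiniteSecondMoment μ

/-- Weak convergence of measures, in duality with bounded continuous functions. -/
def WeakConv (μs : ℕ → Measure H) (μ : Measure H) : Prop :=
  ∀ f : BoundedContinuousFunction H ℝ,
    Tendsto (fun n => ∫ x, f x ∂(μs n)) atTop (𝓝 (∫ x, f x ∂μ))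

/-- Relative entropy `H(μ|γ) = ∫ ρ log ρ dγ` if `μ = ργ`, `+∞` otherwise (for probability
measures the integrand satisfies `ρ log ρ + e⁻¹ ≥ 0`, so we compute via `lintegral`). -/
noncomputable def relEnt (μ γ : Measure H) : ℝ≥0∞ :=
  if μ ≪ γ then
    (∫⁻ x, ENNReal.ofReal ((μ.rnDeriv γ x).toReal * Real.log (μ.rnDeriv γ x).toReal
        + Real.exp (-1)) ∂γ) - ENNReal.ofReal (Real.exp (-1))
  else ⊤

/-- Strong displacement convexity of a functional on `P₂(H)`: for every base point `μbar`
and endpoints `ν₀, ν₁` there is a connecting curve, continuous in the Wasserstein distance,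
along which `W₂²(·, μbar)` is convex with modulus `t(1−t)W₂²(ν₀,ν₁)` and `F` is convex. -/
def StronglyDisplacementConvex (F : Measure H → ℝ≥0∞) : Prop :=
  ∀ μbar ν₀ ν₁ : Measure H, MemP2 μbar → MemP2 ν₀ → MemP2 ν₁ →
    ∃ ν : ℝ → Measure H,
      (∀ t ∈ Set.Icc (0:ℝ) 1, MemP2 (ν t)) ∧ ν 0 = ν₀ ∧ ν 1 = ν₁ ∧
      (∀ t₀ ∈ Set.Icc (0:ℝ) 1,
        Tendsto (fun t => W2sq (ν t) (ν t₀)) (𝓝[Set.Icc (0:ℝ) 1] t₀) (𝓝 0)) ∧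
      (∀ t ∈ Set.Icc (0:ℝ) 1,
        W2sq (ν t) μbar + ENNReal.ofReal (t * (1 - t)) * W2sq ν₀ ν₁ ≤
          ENNReal.ofReal (1 - t) * W2sq ν₀ μbar + ENNReal.ofReal t * W2sq ν₁ μbar) ∧
      (∀ t ∈ Set.Icc (0:ℝ) 1,
        F (ν t) ≤ ENNReal.ofReal (1 - t) * F ν₀ + ENNReal.ofReal t * F ν₁)
/-! Test the minimality of `μτ` against the point `σ_s` at time `s` of the curve from `μτ` to `ν`
given by strong displacement convexity (based at `μbar`). With `c = 1/(2τ)`, convexity of `F` and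
of `W₂²(·, μbar)` along the curve turn `F(μτ) + c W₂²(μτ, μbar) ≤ F(σ_s) + c W₂²(σ_s, μbar)` into
`s (F(μτ) + c W₂²(μτ, μbar) + (1 - s) c W₂²(μτ, ν)) ≤ s (F(ν) + c W₂²(ν, μbar))`. Divide by `s`
and let `s → 0`. -/

section Wasserstein

variable {E : Type*}

lemma ofReal_norm_sub_sq_le [NormedAddCommGroup E] (x y : E) :
    ENNReal.ofReal (‖x - y‖ ^ 2) ≤
      2 * (ENNReal.ofReal (‖x‖ ^ 2) + ENNReal.ofReal (‖y‖ ^ 2)) := by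
  rw [← ENNReal.ofReal_add (by positivity) (by positivity), ← ENNReal.ofReal_ofNat 2,
    ← ENNReal.ofReal_mul zero_le_two]
  exact ENNReal.ofReal_le_ofReal
    ((pow_le_pow_left₀ (norm_nonneg _) (norm_sub_le x y) 2).trans add_sq_le)

variable [MeasurableSpace E]

lemma IsCoupling.swap {μ ν : Measure E} {P : Measure (E × E)} (hP : IsCoupling P μ ν) :
    IsCoupling (P.map Prod.swap) ν μ :=
  ⟨by rw [Measure.map_map measurable_fst measurable_swap]; exact hP.2,
    by rw [Measure.map_map measurable_snd measurable_swap]; exact hP.1⟩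

lemma isCoupling_prod (μ ν : Measure E) [IsProbabilityMeasure μ] [IsProbabilityMeasure ν] :
    IsCoupling (μ.prod ν) μ ν := by
  constructor <;> simp

variable [NormedAddCommGroup E]

lemma W2sq_le_lintegral {μ ν : Measure E} {P : Measure (E × E)} (hP : IsCoupling P μ ν) :
    W2sq μ ν ≤ ∫⁻ p, ENNReal.ofReal (‖p.1 - p.2‖ ^ 2) ∂P :=
  iInf₂_le P hP

lemma W2sq_comm (μ ν : Measure E) : W2sq μ ν = W2sq ν μ := by
  suffices ∀ μ ν : Measure E, W2sq μ ν ≤ W2sq ν μ from le_antisymm (this μ ν) (this ν μ)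
  intro μ ν
  refine le_iInf₂ fun P hP => ?_
  calc W2sq μ ν ≤ ∫⁻ p, ENNReal.ofReal (‖p.1 - p.2‖ ^ 2) ∂(P.map Prod.swap) :=
        W2sq_le_lintegral hP.swap
    _ = ∫⁻ p, ENNReal.ofReal (‖p.1 - p.2‖ ^ 2) ∂P := by
        rw [show (Prod.swap : E × E → E × E) = MeasurableEquiv.prodComm from rfl,
          lintegral_map_equiv]
        exact lintegral_congr fun p => by rw [norm_sub_rev]; rfl

variable [OpensMeasurableSpace E]

lemma IsCoupling.lintegral_lt_top {μ ν : Measure E} {P : Measure (E × E)}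
    (hP : IsCoupling P μ ν) (hμ : HasFiniteSecondMoment μ) (hν : HasFiniteSecondMoment ν) :
    ∫⁻ p, ENNReal.ofReal (‖p.1 - p.2‖ ^ 2) ∂P < ⊤ := by
  have hm : Measurable fun x : E => ENNReal.ofReal (‖x‖ ^ 2) :=
    (measurable_norm.pow_const 2).ennreal_ofReal
  have hm_fst : Measurable fun p : E × E => ENNReal.ofReal (‖p.1‖ ^ 2) := hm.comp measurable_fst
  calc ∫⁻ p, ENNReal.ofReal (‖p.1 - p.2‖ ^ 2) ∂P
      ≤ ∫⁻ p, 2 * (ENNReal.ofReal (‖p.1‖ ^ 2) + ENNReal.ofReal (‖p.2‖ ^ 2)) ∂P :=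
        lintegral_mono fun p => ofReal_norm_sub_sq_le p.1 p.2
    _ = 2 * ((∫⁻ x, ENNReal.ofReal (‖x‖ ^ 2) ∂μ) + ∫⁻ x, ENNReal.ofReal (‖x‖ ^ 2) ∂ν) := by
        rw [lintegral_const_mul' _ _ ENNReal.ofNat_ne_top, lintegral_add_left hm_fst,
          ← hP.1, ← hP.2, lintegral_map hm measurable_fst, lintegral_map hm measurable_snd]
    _ < ⊤ := by
        unfold HasFiniteSecondMoment at hμ hν
        finiteness

lemma W2sq_lt_top {μ ν : Measure E} (hμ : MemP2 μ) (hν : MemP2 ν) : W2sq μ ν < ⊤ := by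
  have := hμ.1
  have := hν.1
  exact (W2sq_le_lintegral (isCoupling_prod μ ν)).trans_lt
    ((isCoupling_prod μ ν).lintegral_lt_top hμ.2 hν.2)

end Wasserstein

lemma ENNReal.add_le_of_forall_add_one_sub_mul_le {x d y : ℝ≥0∞}
    (h : ∀ s, 0 < s → s ≤ 1 → x + (1 - s) * d ≤ y) : x + d ≤ y := by
  refine ENNReal.le_of_forall_lt_one_mul_le fun a ha => ?_
  have h1 : 1 - (1 - a) = a := ENNReal.sub_sub_cancel one_ne_top ha.le
  calc a * (x + d) = a * x + a * d := mul_add _ _ _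
    _ ≤ x + a * d := add_le_add_left (mul_le_of_le_one_left' ha.le) _
    _ ≤ y := h1 ▸ h (1 - a) (tsub_pos_of_lt ha) tsub_le_self

namespace StronglyDisplacementConvex

variable {E : Type*} [NormedAddCommGroup E] [MeasurableSpace E] {F : Measure E → ℝ≥0∞}

lemma exists_interpolant (hF : StronglyDisplacementConvex F) {μbar ν₀ ν₁ : Measure E}
    (hμbar : MemP2 μbar) (h₀ : MemP2 ν₀) (h₁ : MemP2 ν₁) {s : ℝ≥0∞} (hs : s ≤ 1) :
    ∃ σ, MemP2 σ ∧
      W2sq σ μbar + s * (1 - s) * W2sq ν₀ ν₁ ≤ (1 - s) * W2sq ν₀ μbar + s * W2sq ν₁ μbar ∧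
      F σ ≤ (1 - s) * F ν₀ + s * F ν₁ := by
  obtain ⟨ν, hν, -, -, -, hW, hFν⟩ := hF μbar ν₀ ν₁ hμbar h₀ h₁
  have hs_top : s ≠ ⊤ := ne_top_of_le_ne_top one_ne_top hs
  have ht : s.toReal ∈ Set.Icc (0 : ℝ) 1 :=
    ⟨ENNReal.toReal_nonneg, ENNReal.toReal_le_of_le_ofReal zero_le_one (by simpa using hs)⟩
  have h_one_sub : ENNReal.ofReal (1 - s.toReal) = 1 - s := by
    rw [ENNReal.ofReal_sub _ ENNReal.toReal_nonneg, ENNReal.ofReal_one,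
      ENNReal.ofReal_toReal hs_top]
  have h_mul : ENNReal.ofReal (s.toReal * (1 - s.toReal)) = s * (1 - s) := by
    rw [ENNReal.ofReal_mul ENNReal.toReal_nonneg, h_one_sub, ENNReal.ofReal_toReal hs_top]
  refine ⟨ν s.toReal, hν _ ht, ?_, ?_⟩
  · simpa only [h_mul, h_one_sub, ENNReal.ofReal_toReal hs_top] using hW _ ht
  · simpa only [h_one_sub, ENNReal.ofReal_toReal hs_top] using hFν _ ht

lemma jko_perturbed_le [OpensMeasurableSpace E] (hF : StronglyDisplacementConvex F)
    {c : ℝ≥0∞} (hc : c ≠ ⊤) {μbar μτ : Measure E} (hμbar : MemP2 μbar) (hμτ : MemP2 μτ)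
    (hmin : ∀ σ : Measure E, MemP2 σ → F μτ + c * W2sq μτ μbar ≤ F σ + c * W2sq σ μbar)
    {ν : Measure E} (hν : MemP2 ν) (hFν : F ν < ⊤) {s : ℝ≥0∞} (hs0 : 0 < s) (hs1 : s ≤ 1) :
    F μτ + c * W2sq μτ μbar + (1 - s) * (c * W2sq μτ ν) ≤ F ν + c * W2sq ν μbar := by
  obtain ⟨σ, hσ, hWσ, hFσ⟩ := hF.exists_interpolant hμbar hμτ hν hs1
  have hWν : W2sq ν μbar ≠ ⊤ := (W2sq_lt_top hν hμbar).ne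
  have hX : F μτ + c * W2sq μτ μbar ≠ ⊤ := by
    have hA : F μτ ≠ ⊤ := ne_top_of_le_ne_top (by finiteness) (le_self_add.trans (hmin ν hν))
    have hB : W2sq μτ μbar ≠ ⊤ := (W2sq_lt_top hμτ hμbar).ne
    finiteness
  have hs_top : s ≠ ⊤ := ne_top_of_le_ne_top one_ne_top hs1
  have h1s_top : 1 - s ≠ ⊤ := ne_top_of_le_ne_top one_ne_top tsub_le_self
  set X := F μτ + c * W2sq μτ μbar
  refine (ENNReal.mul_le_mul_iff_right hs0.ne' hs_top).mp <|
    (ENNReal.add_le_add_iff_right (show (1 - s) * X ≠ ⊤ by finiteness)).mp ?_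
  calc s * (X + (1 - s) * (c * W2sq μτ ν)) + (1 - s) * X
      = (s + (1 - s)) * X + c * (s * (1 - s) * W2sq μτ ν) := by ring
    _ = X + c * (s * (1 - s) * W2sq μτ ν) := by rw [add_tsub_cancel_of_le hs1, one_mul]
    _ ≤ F σ + c * W2sq σ μbar + c * (s * (1 - s) * W2sq μτ ν) := by gcongr; exact hmin σ hσ
    _ = F σ + c * (W2sq σ μbar + s * (1 - s) * W2sq μτ ν) := by ring
    _ ≤ (1 - s) * F μτ + s * F ν + c * ((1 - s) * W2sq μτ μbar + s * W2sq ν μbar) := by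
        gcongr
    _ = s * (F ν + c * W2sq ν μbar) + (1 - s) * X := by ring

end StronglyDisplacementConvex

/-- Discrete variational inequality for one step of the JKO scheme: if `μτ` minimizes
`μ ↦ F(μ) + W₂²(μ, μbar)/(2τ)` then
`W₂²(μτ,ν) − W₂²(μbar,ν) + W₂²(μτ,μbar) ≤ 2τ(F(ν) − F(μτ))` for every `ν ∈ D(F)`
(stated here in the equivalent rearranged form avoiding `ℝ≥0∞` subtraction). -/
theorem jko_step_variational_inequality (F : Measure H → ℝ≥0∞)
    (hF : StronglyDisplacementConvex F) (τ : ℝ) (hτ : 0 < τ)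
    (μbar μτ : Measure H) (hμbar : MemP2 μbar) (hμτ : MemP2 μτ)
    (hmin : ∀ σ : Measure H, MemP2 σ →
      F μτ + (ENNReal.ofReal (2 * τ))⁻¹ * W2sq μτ μbar ≤
        F σ + (ENNReal.ofReal (2 * τ))⁻¹ * W2sq σ μbar) :
    ∀ ν : Measure H, MemP2 ν → F ν < ⊤ →
      W2sq μτ ν + W2sq μτ μbar + ENNReal.ofReal (2 * τ) * F μτ ≤
        W2sq μbar ν + ENNReal.ofReal (2 * τ) * F ν := by
  intro ν hν hFν
  set k := ENNReal.ofReal (2 * τ)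
  have hk0 : k ≠ 0 := (ENNReal.ofReal_pos.mpr (by positivity)).ne'
  have hk : k * k⁻¹ = 1 := ENNReal.mul_inv_cancel hk0 ENNReal.ofReal_ne_top
  have h := ENNReal.add_le_of_forall_add_one_sub_mul_le fun s hs0 hs1 =>
    hF.jko_perturbed_le (ENNReal.inv_ne_top.mpr hk0) hμbar hμτ hmin hν hFν hs0 hs1
  calc W2sq μτ ν + W2sq μτ μbar + k * F μτ
      = k * (F μτ + k⁻¹ * W2sq μτ μbar + k⁻¹ * W2sq μτ ν) := by
        simp only [mul_add, ← mul_assoc, hk, one_mul]; ring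
    _ ≤ k * (F ν + k⁻¹ * W2sq ν μbar) := by gcongr
    _ = W2sq μbar ν + k * F ν := by
        rw [mul_add, ← mul_assoc, hk, one_mul, W2sq_comm, add_comm]
end
end

section
/- Variable-function Fatou lemma for weak convergence: if μₙ → μ weakly in P(H) and fₙ : H → ℝ are uniformly bounded from below and equi-continuous, then liminfₙ ∫ fₙ dμₙ ≥ ∫ (liminfₙ fₙ) dμ. -/
open MeasureTheory ENNReal Filter Topology Pointwise
open scoped Classical

noncomputable section

variable {H : Type*} [NormedAddCommGroup H] [InnerProductSpace ℝ H]
  [CompleteSpace H] [SecondCountableTopology H] [MeasurableSpace H] [BorelSpace H]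

/-!
The tail infima `gₖ = ⨅ i, f (i + k)` are continuous because the family is equicontinuous and
bounded below, so the portmanteau inequality `∫ gₖ dμ ≤ liminfₙ ∫ gₖ dμₙ` applies to each of
them; since `gₖ ≤ fₙ` for `n ≥ k`, the right side is at most `liminfₙ ∫ fₙ dμₙ`. The `gₖ`
increase to `liminfₙ fₙ`, and monotone convergence finishes the proof.
-/

theorem ciInf_le_ciInf_add {ι : Sort*} [Nonempty ι] {u v : ι → ℝ} {c : ℝ}
    (hu : BddBelow (Set.range u)) (h : ∀ i, u i ≤ v i + c) : ⨅ i, u i ≤ (⨅ i, v i) + c :=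
  sub_le_iff_le_add.1 <| le_ciInf fun i => sub_le_iff_le_add.2 <| (ciInf_le hu i).trans (h i)

theorem Equicontinuous.continuous_ciInf {ι X : Type*} [Nonempty ι] [TopologicalSpace X]
    {F : ι → X → ℝ} (hF : Equicontinuous F) (hbdd : ∀ x, BddBelow (Set.range fun i => F i x)) :
    Continuous fun x => ⨅ i, F i x := by
  refine continuous_iff_continuousAt.2 fun x => Metric.tendsto_nhds.2 fun ε hε => ?_
  filter_upwards [Metric.equicontinuousAt_iff_right.1 (hF x) (ε / 2) (half_pos hε)] with y hy
  have hxy : ∀ i, F i x - F i y < ε / 2 ∧ F i y - F i x < ε / 2 := fun i => by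
    simpa only [Real.dist_eq, abs_sub_lt_iff] using hy i
  have h₁ : ⨅ i, F i y ≤ (⨅ i, F i x) + ε / 2 :=
    ciInf_le_ciInf_add (hbdd y) fun i => by linarith [hxy i]
  have h₂ : ⨅ i, F i x ≤ (⨅ i, F i y) + ε / 2 :=
    ciInf_le_ciInf_add (hbdd x) fun i => by linarith [hxy i]
  rw [Real.dist_eq, abs_sub_lt_iff]
  constructor <;> linarith

theorem Equicontinuous.sub_const {ι X : Type*} [TopologicalSpace X] {F : ι → X → ℝ}
    (hF : Equicontinuous F) (c : ℝ) : Equicontinuous fun i x => F i x - c := by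
  simp_rw [sub_eq_add_neg]
  exact (isUniformEmbedding_translate_add (-c)).isUniformInducing.equicontinuous_iff.1 hF

theorem WeakConv.le_liminf_measure_open {E : Type*} [NormedAddCommGroup E] [MeasurableSpace E]
    [BorelSpace E] {μs : ℕ → Measure E} {μ : Measure E} [∀ n, IsProbabilityMeasure (μs n)]
    [IsProbabilityMeasure μ] (hw : WeakConv μs μ) {G : Set E} (hG : IsOpen G) :
    μ G ≤ atTop.liminf fun n => μs n G :=
  ProbabilityMeasure.le_liminf_measure_open_of_tendsto (μs := fun n => ⟨μs n, inferInstance⟩)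
    (μ := ⟨μ, inferInstance⟩) (ProbabilityMeasure.tendsto_iff_forall_integral_tendsto.2 hw) hG

theorem Equicontinuous.lintegral_liminf_le_liminf_lintegral {X : Type*} [TopologicalSpace X]
    [MeasurableSpace X] [OpensMeasurableSpace X] {μs : ℕ → Measure X} {μ : Measure X}
    {F : ℕ → X → ℝ} (hF : Equicontinuous F) (hF_nonneg : ∀ n x, 0 ≤ F n x)
    (h_opens : ∀ G, IsOpen G → μ G ≤ atTop.liminf fun n => μs n G) :
    ∫⁻ x, liminf (fun n => ENNReal.ofReal (F n x)) atTop ∂μ ≤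
      liminf (fun n => ∫⁻ x, ENNReal.ofReal (F n x) ∂(μs n)) atTop := by
  set g : ℕ → X → ℝ := fun k x => ⨅ i, F (i + k) x
  have hbdd : ∀ k x, BddBelow (Set.range fun i => F (i + k) x) :=
    fun k x => ⟨0, Set.forall_mem_range.2 fun i => hF_nonneg _ x⟩
  have hg_cont : ∀ k, Continuous (g k) := fun k => (hF.comp (· + k)).continuous_ciInf (hbdd k)
  have hg_le : ∀ k n, k ≤ n → ∀ x, g k x ≤ F n x := fun k n hkn x => by
    simpa only [Nat.sub_add_cancel hkn] using ciInf_le (hbdd k x) (n - k)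
  have hg_tail : ∀ k, ∫⁻ x, ENNReal.ofReal (g k x) ∂μ ≤
      liminf (fun n => ∫⁻ x, ENNReal.ofReal (F n x) ∂(μs n)) atTop := fun k =>
    (lintegral_le_liminf_lintegral_of_forall_isOpen_measure_le_liminf_measure (hg_cont k)
      (fun x => le_ciInf fun i => hF_nonneg _ x) h_opens).trans <| liminf_le_liminf <|
        eventually_atTop.2 ⟨k, fun n hn =>
          lintegral_mono fun x => ENNReal.ofReal_le_ofReal (hg_le k n hn x)⟩
  calc ∫⁻ x, liminf (fun n => ENNReal.ofReal (F n x)) atTop ∂μ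
      = ∫⁻ x, ⨆ k, ENNReal.ofReal (g k x) ∂μ := by
        simp only [liminf_eq_iSup_iInf_of_nat', ENNReal.ofReal_iInf, g]
    _ = ⨆ k, ∫⁻ x, ENNReal.ofReal (g k x) ∂μ :=
        lintegral_iSup (fun k => (hg_cont k).measurable.ennreal_ofReal) fun k l hkl x =>
          ENNReal.ofReal_le_ofReal <| le_ciInf fun i => hg_le k (i + l) (by omega) x
    _ ≤ _ := iSup_le hg_tail

/-- Variable-function Fatou lemma for weak convergence: if `μₙ → μ` weakly and the `fₙ`
are uniformly bounded below by `C` and equi-continuous, then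
`liminfₙ ∫ fₙ dμₙ ≥ ∫ liminfₙ fₙ dμ`. Since the measures are probability measures, this
is stated equivalently after subtracting the constant lower bound `C`, with `ℝ≥0∞`-valued
integrals (so that both sides are well defined even when infinite). -/
theorem fatou_variable_functions (μs : ℕ → Measure H) (μ : Measure H)
    (hμs : ∀ n, IsProbabilityMeasure (μs n)) (hμ : IsProbabilityMeasure μ)
    (hw : WeakConv μs μ) (f : ℕ → H → ℝ) (C : ℝ)
    (hbd : ∀ n x, C ≤ f n x) (hec : Equicontinuous f) :
    ∫⁻ x, liminf (fun n => ENNReal.ofReal (f n x - C)) atTop ∂μ ≤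
      liminf (fun n => ∫⁻ x, ENNReal.ofReal (f n x - C) ∂(μs n)) atTop :=
  (hec.sub_const C).lintegral_liminf_le_liminf_lintegral (fun n x => sub_nonneg.2 (hbd n x))
    fun _ hG => hw.le_liminf_measure_open hG
end
end

section
/- Let σₙ, σ_∞ be finite signed Borel measures on H with supₙ |σₙ|(H) < ∞, ∫φ dσₙ → ∫φ dσ_∞ for all φ ∈ C_b(H), uniformly small mass outside a sequence of compact sets (supₙ |σₙ|(H∖J_m) → 0 as m→∞), and let φₙ, φ_∞ be equi-bounded, equi-continuous functions with φₙ → φ_∞ pointwise on the support of σ_∞. Then ∫ φₙ dσₙ → ∫ φ_∞ dσ_∞. -/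
open MeasureTheory ENNReal Filter Topology Pointwise
open scoped Classical

noncomputable section

variable {H : Type*} [NormedAddCommGroup H] [InnerProductSpace ℝ H]
  [CompleteSpace H] [SecondCountableTopology H] [MeasurableSpace H] [BorelSpace H]

/-- Integral of a function against a finite signed measure, via the Jordan
decomposition. -/
noncomputable def sint (σ : SignedMeasure H) (φ : H → ℝ) : ℝ :=
  ∫ x, φ x ∂σ.toJordanDecomposition.posPart - ∫ x, φ x ∂σ.toJordanDecomposition.negPart

/-- The (topological) support of a finite signed measure, via its total variation. -/
def ssupport (σ : SignedMeasure H) : Set H :=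
  {x | ∀ U : Set H, IsOpen U → x ∈ U → 0 < σ.totalVariation U}

/-!
Fix `ε > 0`. By the tightness hypothesis, and inner regularity of `|σ_∞|` on the Polish space `H`,
some compact `K` carries all but `ε` of every `|σₙ|` and of `|σ_∞|`. Along any subsequence,
Arzelà–Ascoli on `K` followed by a Tietze extension gives a further subsequence and some
`Ψ ∈ C_b(H)` with `φₙ → Ψ` uniformly on `K`; the pointwise hypothesis forces `Ψ = φ_∞` on
`supp σ_∞ ∩ K`. Then `∫ φₙ dσₙ - ∫ φ_∞ dσ_∞` splits into `∫ (φₙ - Ψ) dσₙ` (small by uniform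
convergence on `K`), `∫ Ψ dσₙ - ∫ Ψ dσ_∞` (small by weak convergence) and `∫ (Ψ - φ_∞) dσ_∞`
(small because `|σ_∞|` is carried by its support). So every subsequence frequently comes
`O(ε)`-close to the limit, which forces convergence of the whole sequence.
-/

open scoped BoundedContinuousFunction

theorem tendsto_of_forall_strictMono_frequently_dist_le {α : Type*} [PseudoMetricSpace α]
    {a : ℕ → α} {L : α}
    (h : ∀ ε > 0, ∀ k : ℕ → ℕ, StrictMono k → ∃ᶠ n in atTop, dist (a (k n)) L ≤ ε) :
    Tendsto a atTop (𝓝 L) := by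
  by_contra hne
  simp only [Metric.tendsto_nhds, not_forall, not_eventually, not_lt] at hne
  obtain ⟨ε, hε, hfar⟩ := hne
  obtain ⟨k, hk, hkfar⟩ := extraction_of_frequently_atTop hfar
  obtain ⟨n, hn⟩ := (h (ε / 2) (half_pos hε) k hk).exists
  linarith [hkfar n]

theorem isTightMeasureSet_range_of_tendsto_iSup_measure_compl {X ι : Type*}
    [TopologicalSpace X] [MeasurableSpace X] {μ : ι → Measure X} {J : ℕ → Set X}
    (hJc : ∀ m, IsCompact (J m)) (hJ : Tendsto (fun m => ⨆ i, μ i (J m)ᶜ) atTop (𝓝 0)) :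
    IsTightMeasureSet (Set.range μ) := by
  refine isTightMeasureSet_iff_exists_isCompact_measure_compl_le.2 fun ε hε => ?_
  obtain ⟨m, hm⟩ := (hJ.eventually (Iic_mem_nhds hε)).exists
  exact ⟨J m, hJc m, Set.forall_mem_range.2 fun i => (le_iSup (fun i => μ i (J m)ᶜ) i).trans hm⟩

theorem integral_abs_le_of_ae_abs_le_on {α : Type*} [MeasurableSpace α] {μ : Measure α}
    [IsFiniteMeasure μ] {f : α → ℝ} (hf : AEStronglyMeasurable f μ) {B δ : ℝ}
    (hB : ∀ x, |f x| ≤ B) {K : Set α} (hK : MeasurableSet K)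
    (hδ : ∀ᵐ x ∂μ, x ∈ K → |f x| ≤ δ) :
    ∫ x, |f x| ∂μ ≤ δ * μ.real K + B * μ.real Kᶜ := by
  have hint : Integrable (fun x => |f x|) μ :=
    (Integrable.of_bound hf B (Eventually.of_forall fun x => by simpa using hB x)).abs
  rw [← integral_add_compl hK hint]
  gcongr
  · refine (le_abs_self _).trans ?_
    simpa using norm_setIntegral_le_of_norm_le_const_ae' (f := fun x => |f x|)
      (measure_lt_top μ K) (by simpa using hδ)
  · refine (le_abs_self _).trans ?_
    simpa using norm_setIntegral_le_of_norm_le_const (f := fun x => |f x|) (measure_lt_top μ Kᶜ)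
      (fun x _ => by simpa using hB x)

theorem exists_subseq_tendstoUniformly_of_equicontinuous {Y : Type*} [TopologicalSpace Y]
    [CompactSpace Y] {f : ℕ → Y → ℝ} {C : ℝ} (hC : 0 ≤ C) (hfC : ∀ n y, |f n y| ≤ C)
    (hf : Equicontinuous f) :
    ∃ (ψ : Y →ᵇ ℝ) (l : ℕ → ℕ), StrictMono l ∧ ‖ψ‖ ≤ C ∧
      TendstoUniformly (fun n => f (l n)) ψ atTop := by
  let F : ℕ → Y →ᵇ ℝ := fun n =>
    .ofNormedAddCommGroup (f n) (hf.continuous n) C (fun y => by simpa using hfC n y)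
  have hFC : closure (Set.range F) ⊆ Metric.closedBall 0 C :=
    closure_minimal (Set.range_subset_iff.2 fun n => mem_closedBall_zero_iff.2
      ((BoundedContinuousFunction.norm_le hC).2
        fun y => by simpa [F] using hfC n y)) Metric.isClosed_closedBall
  have hF : Equicontinuous ((↑) : Set.range F → Y → ℝ) := by
    have : ((↑) : Set.range F → Y → ℝ) = f ∘ fun g => g.2.choose :=
      funext fun g => by rw [← g.2.choose_spec]; rfl
    exact this ▸ hf.comp _
  have hcpt : IsCompact (closure (Set.range F)) :=
    BoundedContinuousFunction.arzela_ascoli (Set.Icc (-C) C) isCompact_Icc _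
      (fun _ y ⟨n, hn⟩ => hn ▸ (abs_le.1 (hfC n y) : F n y ∈ Set.Icc (-C) C)) hF
  obtain ⟨ψ, hψ, l, hl, hlim⟩ :=
    hcpt.tendsto_subseq fun n => subset_closure (Set.mem_range_self n)
  exact ⟨ψ, l, hl, mem_closedBall_zero_iff.1 (hFC hψ),
    BoundedContinuousFunction.tendsto_iff_tendstoUniformly.1 hlim⟩

theorem exists_subseq_tendstoUniformlyOn_of_equicontinuousOn {X : Type*} [TopologicalSpace X]
    [NormalSpace X] [T2Space X] {f : ℕ → X → ℝ} {K : Set X} (hK : IsCompact K) {C : ℝ}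
    (hC : 0 ≤ C) (hfC : ∀ n, ∀ x ∈ K, |f n x| ≤ C) (hf : EquicontinuousOn f K) :
    ∃ (Ψ : X →ᵇ ℝ) (l : ℕ → ℕ), StrictMono l ∧ ‖Ψ‖ ≤ C ∧
      TendstoUniformlyOn (fun n => f (l n)) Ψ atTop K := by
  have : CompactSpace K := isCompact_iff_compactSpace.1 hK
  obtain ⟨ψ, l, hl, hψC, hlim⟩ := exists_subseq_tendstoUniformly_of_equicontinuous
    (f := fun n => K.domRestrict (f n)) hC (fun n x => hfC n x x.2)
    ((equicontinuous_restrict_iff f).2 hf)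
  obtain ⟨Ψ, hΨ, rfl⟩ := ψ.exists_norm_eq_domRestrict_eq_of_closed hK.isClosed
  exact ⟨Ψ, l, hl, hΨ ▸ hψC, tendstoUniformlyOn_iff_tendstoUniformly_comp_coe.2 hlim⟩

section SignedMeasure

variable {α : Type*} [MeasurableSpace α]

namespace MeasureTheory.SignedMeasure

theorem posPart_le_totalVariation (σ : SignedMeasure α) :
    σ.toJordanDecomposition.posPart ≤ σ.totalVariation :=
  Measure.le_add_right le_rfl

theorem negPart_le_totalVariation (σ : SignedMeasure α) :
    σ.toJordanDecomposition.negPart ≤ σ.totalVariation :=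
  Measure.le_add_left le_rfl

end MeasureTheory.SignedMeasure

theorem sint_sub {σ : SignedMeasure α} {f g : α → ℝ} (hf : Integrable f σ.totalVariation)
    (hg : Integrable g σ.totalVariation) : sint σ (f - g) = sint σ f - sint σ g := by
  simp only [sint, Pi.sub_apply]
  rw [integral_sub (hf.mono_measure σ.posPart_le_totalVariation)
      (hg.mono_measure σ.posPart_le_totalVariation),
    integral_sub (hf.mono_measure σ.negPart_le_totalVariation)
      (hg.mono_measure σ.negPart_le_totalVariation)]
  ring

theorem abs_sint_le_integral_abs {σ : SignedMeasure α} {f : α → ℝ}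
    (hf : Integrable f σ.totalVariation) : |sint σ f| ≤ ∫ x, |f x| ∂σ.totalVariation :=
  calc |sint σ f|
      ≤ |∫ x, f x ∂σ.toJordanDecomposition.posPart| +
        |∫ x, f x ∂σ.toJordanDecomposition.negPart| := abs_sub _ _
    _ ≤ ∫ x, |f x| ∂σ.toJordanDecomposition.posPart +
        ∫ x, |f x| ∂σ.toJordanDecomposition.negPart :=
      add_le_add abs_integral_le_integral_abs abs_integral_le_integral_abs
    _ = ∫ x, |f x| ∂σ.totalVariation :=
      (integral_add_measure (hf.abs.mono_measure σ.posPart_le_totalVariation)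
        (hf.abs.mono_measure σ.negPart_le_totalVariation)).symm

theorem dist_sint_le {σ : SignedMeasure α} {f g : α → ℝ} {C δ : ℝ}
    (hf : AEStronglyMeasurable f σ.totalVariation) (hg : AEStronglyMeasurable g σ.totalVariation)
    (hfC : ∀ x, |f x| ≤ C) (hgC : ∀ x, |g x| ≤ C) {K : Set α} (hK : MeasurableSet K)
    (hδ : ∀ᵐ x ∂σ.totalVariation, x ∈ K → |f x - g x| ≤ δ) :
    dist (sint σ f) (sint σ g) ≤
      δ * σ.totalVariation.real K + 2 * C * σ.totalVariation.real Kᶜ := by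
  have hfi := Integrable.of_bound hf C (Eventually.of_forall fun x => by simpa using hfC x)
  have hgi := Integrable.of_bound hg C (Eventually.of_forall fun x => by simpa using hgC x)
  rw [Real.dist_eq, ← sint_sub hfi hgi]
  exact (abs_sint_le_integral_abs (hfi.sub hgi)).trans <| integral_abs_le_of_ae_abs_le_on
    (hf.sub hg) (fun x => (abs_sub _ _).trans (by linarith [hfC x, hgC x])) hK hδ

end SignedMeasure

section Support

variable {E : Type*} [NormedAddCommGroup E] [MeasurableSpace E]

theorem ssupport_eq_support (σ : SignedMeasure E) : ssupport σ = σ.totalVariation.support := by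
  rw [Measure.support_eq_forall_isOpen]
  ext x
  exact forall_congr' fun U => forall_comm

theorem ae_mem_ssupport [SecondCountableTopology E] (σ : SignedMeasure E) :
    ∀ᵐ x ∂σ.totalVariation, x ∈ ssupport σ := by
  rw [ssupport_eq_support]
  exact Measure.support_mem_ae

theorem frequently_dist_sint_le [BorelSpace E] [SecondCountableTopology E]
    {σs : ℕ → SignedMeasure E} {σ' : SignedMeasure E}
    (hconv : ∀ φ : E →ᵇ ℝ, Tendsto (fun n => sint (σs n) φ) atTop (𝓝 (sint σ' φ)))
    {K : Set E} (hK : IsCompact K) {M C ε : ℝ} (hε : 0 < ε)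
    (hM : ∀ n, (σs n).totalVariation.real Set.univ ≤ M)
    (hσs : ∀ n, (σs n).totalVariation.real Kᶜ ≤ ε) (hσ' : σ'.totalVariation.real Kᶜ ≤ ε)
    {φs : ℕ → E → ℝ} {φ' : E → ℝ} (hφC : ∀ n x, |φs n x| ≤ C) (hφ'C : ∀ x, |φ' x| ≤ C)
    (hφ : Equicontinuous φs) (hφ' : Measurable φ')
    (hφpt : ∀ x ∈ ssupport σ', Tendsto (fun n => φs n x) atTop (𝓝 (φ' x))) :
    ∃ᶠ n in atTop, dist (sint (σs n) (φs n)) (sint σ' φ') ≤ (M + 4 * C + 1) * ε := by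
  have hC : 0 ≤ C := (abs_nonneg _).trans (hφ'C 0)
  obtain ⟨Ψ, l, hl, hΨC, hΨ⟩ := exists_subseq_tendstoUniformlyOn_of_equicontinuousOn hK hC
    (fun n x _ => hφC n x) (hφ.equicontinuousOn K)
  have hΨC' : ∀ x, |Ψ x| ≤ C := fun x => (Ψ.norm_coe_le_norm x).trans hΨC
  have hΨφ' : ∀ x ∈ ssupport σ', x ∈ K → Ψ x = φ' x := fun x hxS hxK =>
    tendsto_nhds_unique (hΨ.tendsto_at hxK) ((hφpt x hxS).comp hl.tendsto_atTop)
  have h₁ : ∀ᶠ n in atTop,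
      dist (sint (σs (l n)) (φs (l n))) (sint (σs (l n)) Ψ) ≤ ε * M + 2 * C * ε := by
    filter_upwards [Metric.tendstoUniformlyOn_iff.1 hΨ ε hε] with n hn
    refine (dist_sint_le (δ := ε) (hφ.continuous _).aestronglyMeasurable
      Ψ.continuous.aestronglyMeasurable (hφC _) hΨC' hK.measurableSet
      (Eventually.of_forall fun x hx => ?_)).trans ?_
    · rw [abs_sub_comm, ← Real.dist_eq]
      exact (hn x hx).le
    · gcongr
      · exact (measureReal_mono (Set.subset_univ K)).trans (hM _)
      · exact hσs _
  have h₂ : ∀ᶠ n in atTop, dist (sint (σs (l n)) Ψ) (sint σ' Ψ) ≤ ε :=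
    ((hconv Ψ).comp hl.tendsto_atTop).eventually (Metric.closedBall_mem_nhds _ hε)
  have h₃ : dist (sint σ' Ψ) (sint σ' φ') ≤ 2 * C * ε := by
    refine (dist_sint_le (δ := 0) Ψ.continuous.aestronglyMeasurable hφ'.aestronglyMeasurable
      hΨC' hφ'C hK.measurableSet ((ae_mem_ssupport σ').mono fun x hxS hxK => ?_)).trans ?_
    · simp [hΨφ' x hxS hxK]
    · rw [zero_mul, zero_add]
      gcongr
  refine hl.tendsto_atTop.frequently (Eventually.frequently ((h₁.and h₂).mono fun n hn => ?_))
  calc _ ≤ _ := dist_triangle4 _ (sint (σs (l n)) Ψ) (sint σ' Ψ) _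
    _ ≤ ε * M + 2 * C * ε + ε + 2 * C * ε := by linarith [hn.1, hn.2]
    _ = (M + 4 * C + 1) * ε := by ring

end Support

/-- Convergence of integrals of varying functions against varying finite signed
measures: under uniform total-variation bounds, weak convergence, uniform tightness,
equi-boundedness and equi-continuity of the functions, and pointwise convergence on
the support of the limit measure, `∫ φₙ dσₙ → ∫ φ_∞ dσ_∞`. -/
theorem signedMeasure_integral_convergence
    (σs : ℕ → SignedMeasure H) (σ' : SignedMeasure H)
    (hbd : ∃ M : ℝ≥0∞, M < ⊤ ∧ ∀ n, (σs n).totalVariation Set.univ ≤ M)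
    (hconv : ∀ φ : BoundedContinuousFunction H ℝ,
      Tendsto (fun n => sint (σs n) φ) atTop (𝓝 (sint σ' φ)))
    (J : ℕ → Set H) (hJc : ∀ m, IsCompact (J m))
    (hJ : Tendsto (fun m => ⨆ n, (σs n).totalVariation (J m)ᶜ) atTop (𝓝 0))
    (φs : ℕ → H → ℝ) (φ' : H → ℝ)
    (hφbd : ∃ C : ℝ, (∀ n x, |φs n x| ≤ C) ∧ ∀ x, |φ' x| ≤ C)
    (hφec : Equicontinuous (fun o : Option ℕ => Option.elim o φ' φs))
    (hφpt : ∀ x ∈ ssupport σ', Tendsto (fun n => φs n x) atTop (𝓝 (φ' x))) :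
    Tendsto (fun n => sint (σs n) (φs n)) atTop (𝓝 (sint σ' φ')) := by
  obtain ⟨M, hM, hσM⟩ := hbd
  obtain ⟨C, hφC, hφ'C⟩ := hφbd
  have hc : 0 < M.toReal + 4 * C + 1 := by
    have := (abs_nonneg _).trans (hφ'C 0)
    positivity
  have htight : IsTightMeasureSet
      ({σ'.totalVariation} ∪ Set.range fun n => (σs n).totalVariation) :=
    isTightMeasureSet_singleton.union
      (isTightMeasureSet_range_of_tendsto_iSup_measure_compl hJc hJ)
  refine tendsto_of_forall_strictMono_frequently_dist_le fun ε hε k hk => ?_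
  have hε' : 0 < ε / (M.toReal + 4 * C + 1) := div_pos hε hc
  obtain ⟨K, hK, hKε⟩ := isTightMeasureSet_iff_exists_isCompact_measure_compl_le.1 htight _
    (ENNReal.ofReal_pos.2 hε')
  have := frequently_dist_sint_le (fun φ => (hconv φ).comp hk.tendsto_atTop) hK hε'
    (fun n => ENNReal.toReal_mono hM.ne (hσM (k n)))
    (fun n => ENNReal.toReal_le_of_le_ofReal hε'.le (hKε _ (Or.inr ⟨k n, rfl⟩)))
    (ENNReal.toReal_le_of_le_ofReal hε'.le (hKε _ (Or.inl rfl))) (fun n => hφC (k n)) hφ'C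
    (hφec.comp (some ∘ k)) (hφec.continuous none).measurable
    (fun x hx => (hφpt x hx).comp hk.tendsto_atTop)
  rwa [mul_div_cancel₀ _ hc.ne'] at this
end
end
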